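/- Let S be a measurable space and suppose V_* , V_† ≡ 0, and for each s ≥ 0 a reserve V_{(⋄,s)} : [0,∞) → ℝ are C^1 functions satisfying, for continuous nonnegative rates μ_{⋄*}(t,τ), μ_{⋄†}(t) and constant r ≥ 0, the ODE d/dt V_{(⋄,s)}(t) = (μ_{⋄*}(t,t-s)·1_{[0,∞)}(t-s) + μ_{⋄†}(t) + r) V_{(⋄,s)}(t) - 1 - V_*(t)·μ_{⋄*}(t,t-s)·1_{[0,∞)}(t-s) on [s, T] with terminal condition V_{(⋄,s)}(T) = 0, where V_* satisfies d/dt V_*(t) = (μ_{*†}(t)+μ_{*⋄}(t)+r) V_*(t) - V_{(⋄,t)}(t) μ_{*⋄}(t), V_*(T)=0. If all payment and rate functions are nonnegative, then V_{(⋄,s)}(t) ≥ 0 and V_*(t) ≥ 0 for all t ∈ [0,T]. -/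

import Mathlib

/-!
Compare every reserve with the negative barrier `-ε e^{K (T - u)}`, where `K` exceeds the
transition rates on `[0, T]`. The reserves vanish at `T`; at the last time `u` at which a reserve
touches the barrier, its Thiele derivative is below the barrier's slope `K ε e^{K (T - u)}` as soon
as the reserve it jumps to lies above the barrier at `u`, contradicting the touch. For a disabled
reserve that partner is the healthy reserve, and for the healthy reserve it is the disabled reserve
with onset `u`, which stays above the barrier on `[u, T]` because the healthy one does. Letting
`ε → 0` gives nonnegativity.
-/

open Set Filter Topology

theorem lt_on_Icc_of_hasDerivAt_lt_at_last_touch {f g f' g' : ℝ → ℝ} {a b : ℝ}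
    (hf : ∀ x ∈ Icc a b, HasDerivAt f (f' x) x) (hg : ∀ x ∈ Icc a b, HasDerivAt g (g' x) x)
    (hb : g b < f b)
    (touch : ∀ x ∈ Ico a b, f x = g x → (∀ y ∈ Icc x b, g y ≤ f y) → f' x < g' x) :
    ∀ x ∈ Icc a b, g x < f x := by
  by_contra! ⟨x, hx, hfgx⟩
  have hD : ∀ x ∈ Icc a b, HasDerivAt (fun y => f y - g y) (f' x - g' x) x :=
    fun x hx => (hf x hx).sub (hg x hx)
  set S := {x ∈ Icc a b | f x ≤ g x}
  have hS_closed : IsClosed S := isClosed_Icc.isClosed_le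
    (fun x hx => (hf x hx).continuousAt.continuousWithinAt)
    (fun x hx => (hg x hx).continuousAt.continuousWithinAt)
  have hS_bdd : BddAbove S := bddAbove_Icc.mono (sep_subset _ _)
  obtain ⟨hx₀, hfg₀⟩ : sSup S ∈ S := hS_closed.csSup_mem ⟨x, hx, hfgx⟩ hS_bdd
  set x₀ := sSup S
  have hx₀b : x₀ < b := hx₀.2.lt_of_ne fun h => (h ▸ hfg₀).not_gt hb
  have h_after : ∀ y ∈ Ioc x₀ b, g y < f y := fun y hy => not_le.mp fun hfg =>
    (le_csSup hS_bdd ⟨⟨hx₀.1.trans hy.1.le, hy.2⟩, hfg⟩).not_gt hy.1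
  have h_right : Ioc x₀ b ∈ 𝓝[>] x₀ := Ioc_mem_nhdsGT hx₀b
  have h_eq : f x₀ = g x₀ := by
    refine le_antisymm hfg₀ (sub_nonneg.mp (ge_of_tendsto
      ((hD x₀ hx₀).continuousAt.continuousWithinAt (s := Ioi x₀)) ?_))
    filter_upwards [h_right] with y hy using sub_nonneg.mpr (h_after y hy).le
  have h_neg : f' x₀ - g' x₀ < 0 := sub_neg.mpr <| touch x₀ ⟨hx₀.1, hx₀b⟩ h_eq
    fun y hy => hy.1.eq_or_lt.elim (fun h => h ▸ h_eq.ge) fun h => (h_after y ⟨h, hy.2⟩).le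
  -- `f - g` vanishes at `x₀` and is positive to its right, so its derivative there is `≥ 0`
  have h_slope :
      Tendsto (slope (fun y => f y - g y) x₀) (𝓝[>] x₀) (𝓝 (f' x₀ - g' x₀)) :=
    (hasDerivWithinAt_iff_tendsto_slope' self_notMem_Ioi).mp (hD x₀ hx₀).hasDerivWithinAt
  refine h_neg.not_ge (ge_of_tendsto h_slope ?_)
  filter_upwards [h_right] with y hy
  rw [slope_def_field, h_eq, sub_self, sub_zero]
  exact div_nonneg (sub_nonneg.mpr (h_after y hy).le) (sub_nonneg.mpr hy.1.le)

noncomputable def expBarrier (K T ε u : ℝ) : ℝ := -ε * Real.exp (K * (T - u))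

theorem hasDerivAt_expBarrier (K T ε u : ℝ) :
    HasDerivAt (expBarrier K T ε) (-K * expBarrier K T ε u) u := by
  have h := ((((hasDerivAt_id u).const_sub T).const_mul K).exp).const_mul (-ε)
  exact h.congr_deriv (by simp only [expBarrier, id]; ring)

theorem expBarrier_self (K T ε : ℝ) : expBarrier K T ε T = -ε := by
  simp [expBarrier]

theorem expBarrier_neg {ε : ℝ} (hε : 0 < ε) (K T u : ℝ) : expBarrier K T ε u < 0 :=
  mul_neg_of_neg_of_pos (neg_neg_of_pos hε) (Real.exp_pos _)

theorem nonneg_of_forall_expBarrier_lt {K T u x : ℝ} (h : ∀ ε > 0, expBarrier K T ε u < x) :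
    0 ≤ x := by
  by_contra! hx
  have he := Real.exp_pos (K * (T - u))
  have := h (-x / Real.exp (K * (T - u))) (div_pos (neg_pos.mpr hx) he)
  rw [expBarrier, neg_div, neg_neg, div_mul_cancel₀ _ he.ne'] at this
  exact this.false

theorem expBarrier_lt_of_hasDerivAt_linear {V c p y b : ℝ → ℝ} {a T M ε : ℝ} (hε : 0 < ε)
    (hV : ∀ u ∈ Icc a T, HasDerivAt V (c u * V u - p u - y u * b u) u) (hVT : V T = 0)
    (hc : ∀ u ∈ Ico a T, 0 ≤ c u) (hp : ∀ u ∈ Ico a T, 0 ≤ p u)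
    (hb : ∀ u ∈ Ico a T, b u ∈ Icc 0 M)
    (hy : ∀ u ∈ Ico a T, (∀ v ∈ Icc u T, expBarrier (M + 1) T ε v ≤ V v) →
      expBarrier (M + 1) T ε u ≤ y u) :
    ∀ u ∈ Icc a T, expBarrier (M + 1) T ε u < V u := by
  refine lt_on_Icc_of_hasDerivAt_lt_at_last_touch hV
    (fun u _ => hasDerivAt_expBarrier _ _ _ u) (by simpa [hVT, expBarrier_self]) ?_
  intro u hu h_touch h_above
  rw [h_touch]
  set φ := expBarrier (M + 1) T ε u
  have hφ : φ < 0 := expBarrier_neg hε _ _ _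
  obtain ⟨hb₀, hbM⟩ := hb u hu
  calc c u * φ - p u - y u * b u ≤ -φ * b u := by
        nlinarith [hc u hu, hp u hu, hy u hu h_above]
    _ ≤ -φ * M := by gcongr; linarith
    _ < -(M + 1) * φ := by linarith

theorem exists_forall_apply_sub_le_of_continuous {g : ℝ → ℝ → ℝ}
    (hg : Continuous fun p : ℝ × ℝ => g p.1 p.2) (T : ℝ) :
    ∃ M, ∀ s ∈ Icc 0 T, ∀ t ∈ Icc s T, g t (t - s) ≤ M := by
  obtain ⟨M, hM⟩ := (isCompact_Icc.prod isCompact_Icc).bddAbove_image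
    (K := Icc 0 T ×ˢ Icc 0 T)
    (hg.comp (continuous_fst.prodMk (continuous_fst.sub continuous_snd))).continuousOn
  exact ⟨M, fun s hs t ht => hM ⟨(t, s), ⟨⟨hs.1.trans ht.1, ht.2⟩, hs⟩, rfl⟩⟩

theorem disability_reserves_nonneg_general
    (T : ℝ) (r : ℝ) (hr : 0 ≤ r)
    (μsd μsD μdd : ℝ → ℝ) (μds : ℝ → ℝ → ℝ)  -- μ_{*†}, μ_{*⋄}, μ_{⋄†}, μ_{⋄*}(t,τ)
    (hμsD_cont : Continuous μsD)
    (hμds_cont : Continuous fun p : ℝ × ℝ => μds p.1 p.2)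
    (hμsd_nonneg : ∀ t, 0 ≤ μsd t) (hμsD_nonneg : ∀ t, 0 ≤ μsD t)
    (hμdd_nonneg : ∀ t, 0 ≤ μdd t) (hμds_nonneg : ∀ t τ, 0 ≤ μds t τ)
    (Vstar : ℝ → ℝ) (Vd : ℝ → ℝ → ℝ)
    -- Thiele's ODE for the disabled-state reserves, on [s, T]:
    (hVd_ODE : ∀ s ∈ Set.Icc 0 T, ∀ t ∈ Set.Icc s T,
      HasDerivAt (Vd s)
        ((μds t (t - s) * (if 0 ≤ t - s then (1 : ℝ) else 0) + μdd t + r) * Vd s t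
          - 1 - Vstar t * (μds t (t - s) * (if 0 ≤ t - s then (1 : ℝ) else 0))) t)
    (hVd_T : ∀ s ∈ Set.Icc 0 T, Vd s T = 0)
    -- Thiele's ODE for the healthy-state reserve:
    (hVstar_ODE : ∀ t ∈ Set.Icc 0 T,
      HasDerivAt Vstar
        ((μsd t + μsD t + r) * Vstar t - Vd t t * μsD t) t)
    (hVstar_T : Vstar T = 0) :
    (∀ s ∈ Set.Icc 0 T, ∀ t ∈ Set.Icc s T, 0 ≤ Vd s t) ∧
    (∀ t ∈ Set.Icc 0 T, 0 ≤ Vstar t) := by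
  obtain ⟨M₁, hM₁⟩ := exists_forall_apply_sub_le_of_continuous hμds_cont T
  obtain ⟨M₂, hM₂⟩ := isCompact_Icc.bddAbove_image (K := Icc 0 T) hμsD_cont.continuousOn
  set M := max M₁ M₂
  have hVd_gt : ∀ ε > 0, ∀ s ∈ Icc 0 T,
      (∀ v ∈ Icc s T, expBarrier (M + 1) T ε v ≤ Vstar v) →
      ∀ t ∈ Icc s T, expBarrier (M + 1) T ε t < Vd s t := fun ε hε s hs hVstar_ge =>
    expBarrier_lt_of_hasDerivAt_linear hε (hVd_ODE s hs) (hVd_T s hs)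
      (fun u hu => by
        rw [if_pos (sub_nonneg.mpr hu.1), mul_one]
        linarith [hμds_nonneg u (u - s), hμdd_nonneg u])
      (fun _ _ => zero_le_one)
      (fun u hu => by
        rw [if_pos (sub_nonneg.mpr hu.1), mul_one]
        exact ⟨hμds_nonneg u (u - s),
          (hM₁ s hs u (Ico_subset_Icc_self hu)).trans (le_max_left _ _)⟩)
      (fun u hu _ => hVstar_ge u (Ico_subset_Icc_self hu))
  have hVstar_gt : ∀ ε > 0, ∀ t ∈ Icc 0 T, expBarrier (M + 1) T ε t < Vstar t := by
    intro ε hε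
    exact expBarrier_lt_of_hasDerivAt_linear (c := fun u => μsd u + μsD u + r) (p := 0)
      (y := fun u => Vd u u) (b := μsD) hε
      (fun u hu => (hVstar_ODE u hu).congr_deriv (by simp)) hVstar_T
      (fun u _ => by linarith [hμsd_nonneg u, hμsD_nonneg u])
      (fun _ _ => le_rfl)
      (fun u hu =>
        ⟨hμsD_nonneg u, (hM₂ ⟨u, Ico_subset_Icc_self hu, rfl⟩).trans (le_max_right _ _)⟩)
      (fun u hu hVstar_ge =>
        (hVd_gt ε hε u (Ico_subset_Icc_self hu) hVstar_ge u ⟨le_rfl, hu.2.le⟩).le)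
  have hVstar_nonneg : ∀ t ∈ Icc 0 T, 0 ≤ Vstar t := fun t ht =>
    nonneg_of_forall_expBarrier_lt fun ε hε => hVstar_gt ε hε t ht
  refine ⟨fun s hs t ht => nonneg_of_forall_expBarrier_lt fun ε hε =>
    hVd_gt ε hε s hs (fun v hv => ?_) t ht, hVstar_nonneg⟩
  exact (expBarrier_neg hε _ _ _).le.trans (hVstar_nonneg v ⟨hs.1.trans hv.1, hv.2⟩)

/-- Nonnegativity of prospective reserves in the disability-with-rehabilitation
model.  `Vstar` is the reserve in the healthy state `*`, `Vd s` is the reserve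
in the disabled state `(⋄, s)` (disability onset at time `s`), the reserve in
the dead state `†` is identically `0`, the benefit rate in the disabled state
is `1`, and `T` is the retirement (terminal) time.  The indicator
`1_{[0,∞)}(t-s)` is written via an `if`. -/
theorem disability_reserves_nonneg
    (T : ℝ) (hT : 0 ≤ T) (r : ℝ) (hr : 0 ≤ r)
    (μsd μsD μdd : ℝ → ℝ) (μds : ℝ → ℝ → ℝ)  -- μ_{*†}, μ_{*⋄}, μ_{⋄†}, μ_{⋄*}(t,τ)
    (hμsd_cont : Continuous μsd) (hμsD_cont : Continuous μsD)
    (hμdd_cont : Continuous μdd)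
    (hμds_cont : Continuous fun p : ℝ × ℝ => μds p.1 p.2)
    (hμsd_nonneg : ∀ t, 0 ≤ μsd t) (hμsD_nonneg : ∀ t, 0 ≤ μsD t)
    (hμdd_nonneg : ∀ t, 0 ≤ μdd t) (hμds_nonneg : ∀ t τ, 0 ≤ μds t τ)
    (Vstar : ℝ → ℝ) (Vd : ℝ → ℝ → ℝ)
    (hVstar_C1 : ContDiffOn ℝ 1 Vstar (Set.Icc 0 T))
    (hVd_C1 : ∀ s ∈ Set.Icc 0 T, ContDiffOn ℝ 1 (Vd s) (Set.Icc s T))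
    -- Thiele's ODE for the disabled-state reserves, on [s, T]:
    (hVd_ODE : ∀ s ∈ Set.Icc 0 T, ∀ t ∈ Set.Icc s T,
      HasDerivAt (Vd s)
        ((μds t (t - s) * (if 0 ≤ t - s then (1 : ℝ) else 0) + μdd t + r) * Vd s t
          - 1 - Vstar t * (μds t (t - s) * (if 0 ≤ t - s then (1 : ℝ) else 0))) t)
    (hVd_T : ∀ s ∈ Set.Icc 0 T, Vd s T = 0)
    -- Thiele's ODE for the healthy-state reserve:
    (hVstar_ODE : ∀ t ∈ Set.Icc 0 T,
      HasDerivAt Vstar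
        ((μsd t + μsD t + r) * Vstar t - Vd t t * μsD t) t)
    (hVstar_T : Vstar T = 0) :
    (∀ s ∈ Set.Icc 0 T, ∀ t ∈ Set.Icc s T, 0 ≤ Vd s t) ∧
    (∀ t ∈ Set.Icc 0 T, 0 ≤ Vstar t) :=
  disability_reserves_nonneg_general T r hr μsd μsD μdd μds hμsD_cont hμds_cont hμsd_nonneg
    hμsD_nonneg hμdd_nonneg hμds_nonneg Vstar Vd hVd_ODE hVd_T hVstar_ODE hVstar_T
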